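/- For f ∈ L¹(G×G), the term J₉ := ∬_{G×G} S_{2^n,2^n}f(x+s, y+t) ∑_{m<2^n} α_m (m+1/2)² 𝟙_{I_n}(s) 𝟙_{I_n}(t) dμ(s,t) satisfies |J₉| ≤ C · 2^{n/2} Mf(x,y), uniformly over sequences (α_m) with ∑_{m<2^n} α_m² ≤ 1. -/

import Mathlib

open MeasureTheory Finset ENNReal

noncomputable section

/-- The Walsh (dyadic) group: countable product of `ZMod 2`. -/
abbrev G := ℕ → ZMod 2

instance : MeasurableSpace (ZMod 2) := ⊤

/-- The dyadic interval `I_n` of rank `n` at `0`. -/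
def In (n : ℕ) : Set G := {y : G | ∀ i < n, y i = 0}

/-- `e_j`: the element whose `j`-th coordinate is `1`, all others `0`. -/
def ej (j : ℕ) : G := fun i => if i = j then 1 else 0

/-- The Walsh–Paley function `w_n`. -/
def walsh (n : ℕ) (x : G) : ℝ :=
  (-1 : ℝ) ^ (∑ k ∈ Finset.range n, if n.testBit k then (x k).val else 0)

/-- The Walsh–Dirichlet kernel `D_n`. -/
def Dker (n : ℕ) (x : G) : ℝ := ∑ k ∈ Finset.range n, walsh k x

/-- `μ` is the (normalized) Haar measure of `G`. -/
def IsHaar (μ : Measure G) : Prop :=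
  IsProbabilityMeasure μ ∧ ∀ a : G, MeasurePreserving (fun y => a + y) μ μ

/-- `log⁺`. -/
def logp (u : ℝ) : ℝ := if 1 < u then Real.log u else 0

/-- The `L log⁺ L` integral of a two-variable function. -/
def LlogL (μ : Measure G) (f : G × G → ℝ) : ℝ≥0∞ :=
  ∫⁻ p, ENNReal.ofReal (|f p| * logp |f p|) ∂(μ.prod μ)

/-- Walsh–Fourier coefficient of a two-variable function. -/
def fhat (μ : Measure G) (f : G × G → ℝ) (i j : ℕ) : ℝ :=
  ∫ p, f p * walsh i p.1 * walsh j p.2 ∂(μ.prod μ)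

/-- Rectangular partial sum `S_{M,N} f`. -/
def SMN (μ : Measure G) (M N : ℕ) (f : G × G → ℝ) (x y : G) : ℝ :=
  ∑ i ∈ Finset.range M, ∑ j ∈ Finset.range N, fhat μ f i j * walsh i x * walsh j y

/-- One-dimensional `2^n`-th partial sum (conditional expectation form). -/
def S2 (μ : Measure G) (n : ℕ) (f : G → ℝ) (x : G) : ℝ :=
  2 ^ n * ∫ t in In n, f (x + t) ∂μ

/-- Schipp's operator `V_n`. -/
def Vop (μ : Measure G) (n : ℕ) (f : G → ℝ) (x : G) : ℝ :=
  ((1 / 2 ^ n) * ∫ t, (∑ j ∈ Finset.range n,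
      2 ^ j / 2 * Set.indicator (In j) (fun _ => (1 : ℝ)) t * S2 μ n f (x + t + ej j)) ^ 2 ∂μ)
    ^ (1/2 : ℝ)

/-- `S^{(1)}_{2^n}`: partial sum in the first variable. -/
def S1 (μ : Measure G) (n : ℕ) (f : G × G → ℝ) (x y : G) : ℝ :=
  2 ^ n * ∫ s in In n, f (x + s, y) ∂μ

/-- `S^{(2)}_{2^n}`: partial sum in the second variable. -/
def S2' (μ : Measure G) (n : ℕ) (f : G × G → ℝ) (x y : G) : ℝ :=
  2 ^ n * ∫ t in In n, f (x, y + t) ∂μ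

/-- `V_1` of the paper (with index `n`). -/
def V1 (μ : Measure G) (n : ℕ) (f : G × G → ℝ) (x y : G) : ℝ :=
  ((1 / 2 ^ n) * ∫ t, (∑ j ∈ Finset.range n,
      2 ^ j / 2 * Set.indicator (In j) (fun _ => (1 : ℝ)) t * S1 μ n f (x + t + ej j) y) ^ 2 ∂μ)
    ^ (1/2 : ℝ)

/-- `V_2` of the paper (with index `n`). -/
def V2 (μ : Measure G) (n : ℕ) (f : G × G → ℝ) (x y : G) : ℝ :=
  ((1 / 2 ^ n) * ∫ t, (∑ j ∈ Finset.range n,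
      2 ^ j / 2 * Set.indicator (In j) (fun _ => (1 : ℝ)) t * S2' μ n f x (y + t + ej j)) ^ 2 ∂μ)
    ^ (1/2 : ℝ)

/-- Hybrid maximal function in the first variable (`ℝ≥0∞`-valued). -/
def M1e (μ : Measure G) (f : G × G → ℝ) (p : G × G) : ℝ≥0∞ :=
  ⨆ n : ℕ, ENNReal.ofReal (2 ^ n * ∫ s in In n, |f (p.1 + s, p.2)| ∂μ)

/-- Hybrid maximal function in the second variable (`ℝ≥0∞`-valued). -/
def M2e (μ : Measure G) (f : G × G → ℝ) (p : G × G) : ℝ≥0∞ :=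
  ⨆ n : ℕ, ENNReal.ofReal (2 ^ n * ∫ t in In n, |f (p.1, p.2 + t)| ∂μ)

/-- Two-dimensional dyadic maximal function (`ℝ≥0∞`-valued). -/
def Me (μ : Measure G) (f : G × G → ℝ) (p : G × G) : ℝ≥0∞ :=
  ⨆ n : ℕ, ENNReal.ofReal (2 ^ (2*n) *
    |∫ q in (In n) ×ˢ (In n), f (p.1 + q.1, p.2 + q.2) ∂(μ.prod μ)|)

/-- The diagonal maximal function `A` of the paper (`ℝ≥0∞`-valued). -/
def Ae (μ : Measure G) (f : G × G → ℝ) (p : G × G) : ℝ≥0∞ :=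
  ⨆ j : ℕ, ENNReal.ofReal (2 ^ j * ∫ s in In j, |f (p.1 + s, p.2 + s)| ∂μ)

/-- `ℝ≥0∞`-valued partial sum in the first variable. -/
def S1e (μ : Measure G) (n : ℕ) (h : G × G → ℝ≥0∞) (x y : G) : ℝ≥0∞ :=
  2 ^ n * ∫⁻ s in In n, h (x + s, y) ∂μ

/-- `ℝ≥0∞`-valued partial sum in the second variable. -/
def S2e (μ : Measure G) (n : ℕ) (h : G × G → ℝ≥0∞) (x y : G) : ℝ≥0∞ :=
  2 ^ n * ∫⁻ t in In n, h (x, y + t) ∂μ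

/-- `ℝ≥0∞`-valued maximal operator `V_1`. -/
def V1e (μ : Measure G) (h : G × G → ℝ≥0∞) (x y : G) : ℝ≥0∞ :=
  ⨆ n : ℕ, ((1 / 2 ^ n) * ∫⁻ t, (∑ j ∈ Finset.range n,
      2 ^ j / 2 * Set.indicator (In j) (fun _ => (1 : ℝ≥0∞)) t * S1e μ n h (x + t + ej j) y) ^ 2 ∂μ)
    ^ (1/2 : ℝ)

/-- `ℝ≥0∞`-valued maximal operator `V_2`. -/
def V2e (μ : Measure G) (h : G × G → ℝ≥0∞) (x y : G) : ℝ≥0∞ :=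
  ⨆ n : ℕ, ((1 / 2 ^ n) * ∫⁻ t, (∑ j ∈ Finset.range n,
      2 ^ j / 2 * Set.indicator (In j) (fun _ => (1 : ℝ≥0∞)) t * S2e μ n h x (y + t + ej j)) ^ 2 ∂μ)
    ^ (1/2 : ℝ)

/-- The strong mean `H^p_n f`. -/
def Hp (μ : Measure G) (p : ℝ) (n : ℕ) (f : G × G → ℝ) (x y : G) : ℝ :=
  ((1 / 2 ^ n) * ∑ m ∈ Finset.range (2 ^ n), |SMN μ m m f x y| ^ p) ^ (1 / p)

/-!
For `i < 2^n` the Walsh function `w_i` is a character of `G` that is trivial on `I_n`, so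
`S_{2^n,2^n} f` is constant on the cosets of `I_n × I_n`. Summing these characters gives the
Dirichlet kernel `D_{2^n} = 2^n 𝟙_{I_n}`, so that constant is `2^{2n}` times the integral of `f`
over the coset. Hence `J₉ = c · ∫_{I_n × I_n} f(x + s, y + t)` with `c = ∑_{m < 2^n} α_m (m + 1/2)²`.
By Cauchy–Schwarz `c² ≤ ∑_{m < 2^n} (m + 1/2)⁴ ≤ 2^{5n}`, i.e. `|c| ≤ 2^{n/2} · 2^{2n}`, and
`2^{2n} |∫_{I_n × I_n} f(x + s, y + t)| ≤ Mf(x, y)`.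
-/

theorem walsh_eq_prod (i : ℕ) (x : G) {N : ℕ} (h : i < 2 ^ N) :
    walsh i x = ∏ k ∈ range N, if i.testBit k then (-1 : ℝ) ^ (x k).val else 1 := by
  have extend : ∀ {M N : ℕ}, M ≤ N → i < 2 ^ M →
      ∏ k ∈ range M, (if i.testBit k then (-1 : ℝ) ^ (x k).val else 1) =
        ∏ k ∈ range N, if i.testBit k then (-1 : ℝ) ^ (x k).val else 1 :=
    fun hMN hM => prod_subset (range_subset_range.2 hMN) fun k _ hk => by
      rw [Nat.testBit_eq_false_of_lt (hM.trans_le (Nat.pow_le_pow_right two_pos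
        (not_lt.1 (mt mem_range.2 hk))))]
      rfl
  have hi : walsh i x = ∏ k ∈ range i, if i.testBit k then (-1 : ℝ) ^ (x k).val else 1 := by
    rw [walsh, ← prod_pow_eq_pow_sum]
    exact prod_congr rfl fun k _ => by split_ifs <;> rfl
  rcases le_total i N with hiN | hNi
  · rw [hi, extend hiN i.lt_two_pow_self]
  · rw [hi, extend hNi h]

theorem neg_one_pow_val_add (a b : ZMod 2) :
    (-1 : ℝ) ^ (a + b).val = (-1) ^ a.val * (-1) ^ b.val := by
  rw [ZMod.val_add, ← neg_one_pow_eq_pow_mod_two, pow_add]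

theorem walsh_add (i : ℕ) (x y : G) : walsh i (x + y) = walsh i x * walsh i y := by
  simp only [walsh_eq_prod i _ i.lt_two_pow_self, ← prod_mul_distrib]
  refine prod_congr rfl fun k _ => ?_
  split_ifs
  · exact neg_one_pow_val_add (x k) (y k)
  · rw [mul_one]

theorem walsh_eq_one_of_mem_In {i n : ℕ} (h : i < 2 ^ n) {q : G} (hq : q ∈ In n) :
    walsh i q = 1 := by
  rw [walsh_eq_prod i q h]
  exact prod_eq_one fun k hk => by simp [hq k (mem_range.1 hk)]

theorem walsh_add_of_mem_In {i n : ℕ} (h : i < 2 ^ n) (x : G) {q : G} (hq : q ∈ In n) :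
    walsh i (x + q) = walsh i x := by
  rw [walsh_add, walsh_eq_one_of_mem_In h hq, mul_one]

theorem abs_walsh (i : ℕ) (x : G) : |walsh i x| = 1 := by
  rw [walsh, abs_pow, abs_neg, abs_one, one_pow]

theorem measurable_walsh (i : ℕ) : Measurable (walsh i) :=
  (measurable_from_top (f := fun m : ℕ => (-1 : ℝ) ^ m)).comp <|
    Finset.measurable_sum _ fun k _ => (measurable_from_top
      (f := fun a : ZMod 2 => if i.testBit k then a.val else 0)).comp (measurable_pi_apply k)

theorem walsh_two_pow_add {n i : ℕ} (hi : i < 2 ^ n) (x : G) :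
    walsh (2 ^ n + i) x = (-1 : ℝ) ^ (x n).val * walsh i x := by
  have hlt : 2 ^ n + i < 2 ^ (n + 1) := by rw [pow_succ]; omega
  rw [walsh_eq_prod _ x hlt, walsh_eq_prod i x (hi.trans (Nat.pow_lt_pow_succ one_lt_two)),
    prod_range_succ, prod_range_succ, Nat.testBit_two_pow_add_eq, Nat.testBit_eq_false_of_lt hi,
    prod_congr rfl fun k hk => by rw [Nat.testBit_two_pow_add_gt (mem_range.1 hk)]]
  simp only [Bool.not_false, if_true, Bool.false_eq_true, if_false, one_mul, mul_comm]

theorem mem_In_succ_iff {n : ℕ} {u : G} : u ∈ In (n + 1) ↔ u ∈ In n ∧ u n = 0 :=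
  Nat.forall_lt_succ_right

theorem Dker_two_pow (n : ℕ) (u : G) :
    Dker (2 ^ n) u = 2 ^ n * Set.indicator (In n) (fun _ => (1 : ℝ)) u := by
  induction n with
  | zero => simp [Dker, walsh, show u ∈ In 0 from fun _ h => absurd h (Nat.not_lt_zero _)]
  | succ n ih =>
    have hsplit : Dker (2 ^ (n + 1)) u = (1 + (-1 : ℝ) ^ (u n).val) * Dker (2 ^ n) u := by
      rw [Dker, pow_succ, mul_two, sum_range_add,
        sum_congr rfl fun i hi => walsh_two_pow_add (mem_range.1 hi) u, ← mul_sum, Dker]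
      ring
    rw [hsplit, ih]
    by_cases hu : u ∈ In n
    · rcases (show ∀ a : ZMod 2, a = 0 ∨ a = 1 by decide) (u n) with h | h
      · rw [Set.indicator_of_mem hu, Set.indicator_of_mem (mem_In_succ_iff.2 ⟨hu, h⟩), h,
          ZMod.val_zero]
        ring
      · have hu' : u ∉ In (n + 1) := fun h' => by simp [(mem_In_succ_iff.1 h').2] at h
        rw [Set.indicator_of_notMem hu', h, ZMod.val_one]
        norm_num
    · rw [Set.indicator_of_notMem hu,
        Set.indicator_of_notMem fun h' => hu (mem_In_succ_iff.1 h').1]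
      simp

theorem measurableSet_In (n : ℕ) : MeasurableSet (In n) := by
  have h : In n = ⋂ i ∈ range n, (fun y : G => y i) ⁻¹' {0} := by ext; simp [In]
  rw [h]
  exact (range n).measurableSet_biInter fun i _ =>
    measurable_pi_apply i (measurableSet_singleton 0)

theorem ej_add_mem_In_succ_iff {n : ℕ} {u : G} :
    ej n + u ∈ In (n + 1) ↔ u ∈ In n ∧ 1 + u n = 0 := by
  have hlow : ∀ i < n, (ej n + u) i = u i := fun i hi => by simp [ej, hi.ne]
  rw [mem_In_succ_iff]
  exact and_congr (forall₂_congr fun i hi => by rw [hlow i hi]) (by simp [ej])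

/-- `I_n` is the disjoint union of `I_{n+1}` and its translate by `e_n`, which has the same
Haar measure. -/
theorem measure_In {μ : Measure G} (hμ : IsHaar μ) (n : ℕ) : μ (In n) = (2 ^ n)⁻¹ := by
  have := hμ.1
  induction n with
  | zero =>
    simp [show In 0 = Set.univ from Set.eq_univ_of_forall fun _ _ h => absurd h (Nat.not_lt_zero _)]
  | succ n ih =>
    have hcases : ∀ a : ZMod 2, (a = 0 ∨ 1 + a = 0) ∧ ¬(a = 0 ∧ 1 + a = 0) := by decide
    have hsplit : In n = In (n + 1) ∪ (ej n + ·) ⁻¹' In (n + 1) := by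
      ext u
      rw [Set.mem_union, Set.mem_preimage, ej_add_mem_In_succ_iff, mem_In_succ_iff]
      have := (hcases (u n)).1
      tauto
    have hdisj : Disjoint (In (n + 1)) ((ej n + ·) ⁻¹' In (n + 1)) :=
      Set.disjoint_left.2 fun u h₁ h₂ =>
        (hcases (u n)).2 ⟨(mem_In_succ_iff.1 h₁).2, (ej_add_mem_In_succ_iff.1 h₂).2⟩
    have htrans : μ ((ej n + ·) ⁻¹' In (n + 1)) = μ (In (n + 1)) :=
      (hμ.2 (ej n)).measure_preimage (measurableSet_In _).nullMeasurableSet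
    have hhalf : (2 ^ n)⁻¹ = 2 * μ (In (n + 1)) := by
      rw [← ih, hsplit, measure_union hdisj ((hμ.2 _).measurable (measurableSet_In _)), htrans,
        two_mul]
    rw [← ENNReal.mul_right_inj two_ne_zero ofNat_ne_top, ← hhalf, pow_succ,
      ENNReal.mul_inv (by simp) (by simp), mul_left_comm,
      ENNReal.mul_inv_cancel (by simp) (by simp), mul_one]

theorem SMN_eq_integral_mul_Dker {μ : Measure G} {f : G × G → ℝ} (hf : Integrable f (μ.prod μ))
    (M N : ℕ) (x y : G) :
    SMN μ M N f x y = ∫ p, f p * Dker M (p.1 + x) * Dker N (p.2 + y) ∂(μ.prod μ) := by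
  have hint : ∀ i j, Integrable
      (fun p : G × G => f p * walsh i (p.1 + x) * walsh j (p.2 + y)) (μ.prod μ) := fun i j =>
    (hf.mul_bdd (c := 1) (((measurable_walsh i).comp (measurable_fst.add_const x)).mul
      ((measurable_walsh j).comp (measurable_snd.add_const y))).aestronglyMeasurable
      (.of_forall fun p => by simp [abs_walsh])).congr (.of_forall fun p => by simp [mul_assoc])
  have hterm : ∀ i j, fhat μ f i j * walsh i x * walsh j y =
      ∫ p, f p * walsh i (p.1 + x) * walsh j (p.2 + y) ∂(μ.prod μ) := fun i j => by
    rw [fhat, ← integral_mul_const, ← integral_mul_const]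
    exact integral_congr_ae (.of_forall fun p => by simp only [walsh_add]; ring)
  calc SMN μ M N f x y
      = ∑ i ∈ range M, ∫ p, ∑ j ∈ range N,
          f p * walsh i (p.1 + x) * walsh j (p.2 + y) ∂(μ.prod μ) :=
        sum_congr rfl fun i _ => by
          simp only [hterm]
          exact (integral_finsetSum _ fun j _ => hint i j).symm
    _ = ∫ p, ∑ i ∈ range M, ∑ j ∈ range N,
          f p * walsh i (p.1 + x) * walsh j (p.2 + y) ∂(μ.prod μ) :=
        (integral_finsetSum _ fun i _ => integrable_finsetSum _ fun j _ => hint i j).symm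
    _ = _ := integral_congr_ae (.of_forall fun p => by
        rw [Dker, Dker, mul_assoc, sum_mul_sum, mul_sum]
        simp only [mul_sum, mul_assoc])

theorem SMN_two_pow_eq_setIntegral {μ : Measure G} (hμ : IsHaar μ) {f : G × G → ℝ}
    (hf : Integrable f (μ.prod μ)) (n : ℕ) (x y : G) :
    SMN μ (2 ^ n) (2 ^ n) f x y =
      2 ^ n * 2 ^ n * ∫ q in In n ×ˢ In n, f (x + q.1, y + q.2) ∂(μ.prod μ) := by
  have := hμ.1
  set T : G × G → G × G := fun q => (x + q.1, y + q.2)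
  have hT : MeasurePreserving T (μ.prod μ) (μ.prod μ) := (hμ.2 x).prod (hμ.2 y)
  have hTT : Function.LeftInverse T T := fun q => by
    simp [T, ← add_assoc, CharTwo.add_self_eq_zero]
  have hTe : MeasurableEmbedding T := .of_measurable_inverse hT.measurable
    (by rw [hTT.surjective.range_eq]; exact .univ) hT.measurable hTT
  rw [SMN_eq_integral_mul_Dker hf, ← hT.integral_comp hTe, ← integral_const_mul,
    ← integral_indicator ((measurableSet_In n).prod (measurableSet_In n))]
  refine integral_congr_ae (.of_forall fun q => ?_)
  simp only [T, Dker_two_pow, add_right_comm x q.1 x, add_right_comm y q.2 y,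
    CharTwo.add_self_eq_zero, zero_add]
  by_cases h₁ : q.1 ∈ In n <;> by_cases h₂ : q.2 ∈ In n <;>
    simp [h₁, h₂, Set.mem_prod, mul_comm, mul_assoc]

theorem SMN_add_of_mem_In (μ : Measure G) (f : G × G → ℝ) {M N n : ℕ} (hM : M ≤ 2 ^ n)
    (hN : N ≤ 2 ^ n) (x y : G) {s t : G} (hs : s ∈ In n) (ht : t ∈ In n) :
    SMN μ M N f (x + s) (y + t) = SMN μ M N f x y :=
  sum_congr rfl fun i hi => sum_congr rfl fun j hj => by
    rw [walsh_add_of_mem_In ((mem_range.1 hi).trans_le hM) x hs,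
      walsh_add_of_mem_In ((mem_range.1 hj).trans_le hN) y ht]

theorem integral_SMN_mul_indicator {μ : Measure G} (hμ : IsHaar μ) {f : G × G → ℝ}
    (hf : Integrable f (μ.prod μ)) (n : ℕ) (x y : G) (c : ℝ) :
    ∫ q, SMN μ (2 ^ n) (2 ^ n) f (x + q.1) (y + q.2) * c *
        Set.indicator (In n) (fun _ => (1 : ℝ)) q.1 *
        Set.indicator (In n) (fun _ => (1 : ℝ)) q.2 ∂(μ.prod μ) =
      c * ∫ q in In n ×ˢ In n, f (x + q.1, y + q.2) ∂(μ.prod μ) := by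
  have := hμ.1
  have hconst : ∀ q : G × G, SMN μ (2 ^ n) (2 ^ n) f (x + q.1) (y + q.2) * c *
      Set.indicator (In n) (fun _ => (1 : ℝ)) q.1 * Set.indicator (In n) (fun _ => (1 : ℝ)) q.2 =
      SMN μ (2 ^ n) (2 ^ n) f x y * c * (In n ×ˢ In n).indicator 1 q := fun ⟨s, t⟩ => by
    by_cases hs : s ∈ In n
    · by_cases ht : t ∈ In n
      · simp [hs, ht, SMN_add_of_mem_In μ f le_rfl le_rfl x y hs ht]
      · simp [ht]
    · simp [hs]
  rw [integral_congr_ae (.of_forall hconst), integral_const_mul,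
    integral_indicator_one ((measurableSet_In n).prod (measurableSet_In n)), Measure.real,
    Measure.prod_prod, measure_In hμ, SMN_two_pow_eq_setIntegral hμ hf]
  simp only [toReal_mul, toReal_inv, toReal_pow, toReal_ofNat]
  field_simp

theorem sq_sum_mul_add_half_sq_le (N : ℕ) (α : ℕ → ℝ) :
    (∑ m ∈ range N, α m * ((m : ℝ) + 1 / 2) ^ 2) ^ 2 ≤ (∑ m ∈ range N, α m ^ 2) * N ^ 5 := by
  refine (sum_mul_sq_le_sq_mul_sq _ _ _).trans
    (mul_le_mul_of_nonneg_left ?_ (sum_nonneg fun _ _ => sq_nonneg _))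
  calc ∑ m ∈ range N, (((m : ℝ) + 1 / 2) ^ 2) ^ 2
      ≤ ∑ _m ∈ range N, (N : ℝ) ^ 4 := sum_le_sum fun m hm => by
        have hmN : (m : ℝ) + 1 ≤ N := by exact_mod_cast mem_range.1 hm
        rw [← pow_mul]
        exact pow_le_pow_left₀ (by positivity) (by linarith) 4
    _ = N ^ 5 := by rw [sum_const, card_range, nsmul_eq_mul]; ring

theorem abs_sum_mul_add_half_sq_le {n : ℕ} {α : ℕ → ℝ}
    (hα : ∑ m ∈ range (2 ^ n), α m ^ 2 ≤ 1) :
    |∑ m ∈ range (2 ^ n), α m * ((m : ℝ) + 1 / 2) ^ 2| ≤ 2 ^ ((n : ℝ) / 2) * 2 ^ (2 * n) := by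
  have hsqrt : ((2 : ℝ) ^ ((n : ℝ) / 2)) ^ 2 = 2 ^ n := by
    rw [← Real.rpow_natCast, ← Real.rpow_mul zero_le_two]
    norm_num
  refine abs_le_of_sq_le_sq ?_ (by positivity)
  calc _ ≤ (∑ m ∈ range (2 ^ n), α m ^ 2) * ((2 ^ n : ℕ) : ℝ) ^ 5 :=
        sq_sum_mul_add_half_sq_le _ α
    _ ≤ ((2 : ℝ) ^ n) ^ 5 := by push_cast; exact mul_le_of_le_one_left (by positivity) hα
    _ = _ := by rw [mul_pow, hsqrt]; ring

/-- the estimate `|J₉| ≲ 2^{n/2} Mf(x,y)`. -/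
theorem J9_estimate :
    ∃ C : ℝ, 0 < C ∧ ∀ (μ : Measure G), IsHaar μ →
      ∀ f : G × G → ℝ, Integrable f (μ.prod μ) →
      ∀ (n : ℕ) (α : ℕ → ℝ), (∑ m ∈ Finset.range (2 ^ n), (α m) ^ 2) ≤ 1 →
      ∀ x y : G,
        ENNReal.ofReal
          |∫ q, SMN μ (2 ^ n) (2 ^ n) f (x + q.1) (y + q.2) *
              (∑ m ∈ Finset.range (2 ^ n), α m * ((m : ℝ) + 1/2) ^ 2) *
              Set.indicator (In n) (fun _ => (1 : ℝ)) q.1 *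
              Set.indicator (In n) (fun _ => (1 : ℝ)) q.2 ∂(μ.prod μ)| ≤
          ENNReal.ofReal (C * (2 : ℝ) ^ ((n : ℝ) / 2)) * Me μ f (x, y) := by
  refine ⟨1, one_pos, fun μ hμ f hf n α hα x y => ?_⟩
  set c := ∑ m ∈ range (2 ^ n), α m * ((m : ℝ) + 1 / 2) ^ 2
  set r := ∫ q in In n ×ˢ In n, f (x + q.1, y + q.2) ∂(μ.prod μ)
  have hMe : ENNReal.ofReal (2 ^ (2 * n) * |r|) ≤ Me μ f (x, y) :=
    le_iSup (fun k : ℕ => ENNReal.ofReal (2 ^ (2 * k) *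
      |∫ q in In k ×ˢ In k, f (x + q.1, y + q.2) ∂(μ.prod μ)|)) n
  rw [integral_SMN_mul_indicator hμ hf, one_mul]
  calc ENNReal.ofReal |c * r|
      ≤ ENNReal.ofReal (2 ^ ((n : ℝ) / 2) * (2 ^ (2 * n) * |r|)) := by
        rw [abs_mul, ← mul_assoc]
        exact ofReal_le_ofReal
          (mul_le_mul_of_nonneg_right (abs_sum_mul_add_half_sq_le hα) (abs_nonneg r))
    _ = ENNReal.ofReal (2 ^ ((n : ℝ) / 2)) * ENNReal.ofReal (2 ^ (2 * n) * |r|) :=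
        ofReal_mul (by positivity)
    _ ≤ ENNReal.ofReal (2 ^ ((n : ℝ) / 2)) * Me μ f (x, y) := by gcongr
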